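/- The complete bipartite graph K_{2,3} is minimally unlabellable: K_{2,3} is not labellable, but every proper induced subgraph of K_{2,3} is labellable. -/

import Mathlib

/-!
Let `A, B` label the two left vertices and `X, Y, Z` the three right ones. As `A, B` are distinct
and non-adjacent, `|A ∩ B| ≤ k - 2`, while each right label meets `A` and `B` in `k - 1` elements and
so contains at least `k - 2` elements of `A ∩ B`: thus `A ∩ B` is a `(k - 2)`-set inside `X, Y, Z`,
and any two of `X, Y, Z` meet exactly in `A ∩ B`. Counting `(X ∪ Y) ∩ A` gives `A ⊆ X ∪ Y`, hence
`Z ∩ A ⊆ (Z ∩ X) ∪ (Z ∩ Y) = A ∩ B`, too small to have `k - 1` elements.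
Deleting a vertex of `K_{2,3}` leaves the star `K_{1,3}` or the `4`-cycle, which are labelled
explicitly; labellability passes to induced subgraphs.
-/

/-- `H` is labellable: for some positive integer `k` the vertices of `H` can be
injectively labelled by `k`-element subsets of `ℕ` so that two distinct vertices
are adjacent if and only if their labels intersect in a set of size `k - 1`. -/
def Labellable {V : Type*} (H : SimpleGraph V) : Prop :=
  ∃ k : ℕ, 0 < k ∧ ∃ ℓ : V → Finset ℕ, Function.Injective ℓ ∧
    (∀ v, (ℓ v).card = k) ∧
    ∀ u v : V, u ≠ v → (H.Adj u v ↔ (ℓ u ∩ ℓ v).card = k - 1)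

open Finset

namespace Finset

variable {α : Type*} [DecidableEq α] {k : ℕ} {A B C X Y : Finset α}

lemma card_inter_add_two_le (hA : #A = k) (hB : #B = k) (hne : A ≠ B)
    (hAB : #(A ∩ B) ≠ k - 1) : #(A ∩ B) + 2 ≤ k := by
  have hlt : #(A ∩ B) < k := by
    refine hA ▸ card_lt_card (ssubset_of_subset_of_ne inter_subset_left fun h => hne ?_)
    rw [inter_eq_left] at h
    exact eq_of_subset_of_card_le h (by omega)
  omega

lemma le_card_inter_inter_add_two (hC : #C = k) (hCA : #(C ∩ A) = k - 1)
    (hCB : #(C ∩ B) = k - 1) : k ≤ #(C ∩ (A ∩ B)) + 2 := by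
  have hunion : #(C ∩ A ∪ C ∩ B) ≤ k :=
    hC ▸ card_le_card (union_subset inter_subset_left inter_subset_left)
  have := card_union_add_card_inter (C ∩ A) (C ∩ B)
  rw [← inter_inter_distrib_left] at this
  omega

lemma inter_subset_of_card_inter_eq (hC : #C = k) (hCA : #(C ∩ A) = k - 1)
    (hCB : #(C ∩ B) = k - 1) (hAB : #(A ∩ B) + 2 ≤ k) : A ∩ B ⊆ C := by
  have := le_card_inter_inter_add_two hC hCA hCB
  rw [← eq_of_subset_of_card_le (inter_subset_right : C ∩ (A ∩ B) ⊆ A ∩ B) (by omega)]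
  exact inter_subset_left

lemma subset_union_of_card_inter_eq (hA : #A = k) (hXA : #(X ∩ A) = k - 1)
    (hYA : #(Y ∩ A) = k - 1) (hXY : #(X ∩ Y) + 2 ≤ k) : A ⊆ X ∪ Y := by
  have hXYA : #(X ∩ A ∩ (Y ∩ A)) ≤ #(X ∩ Y) :=
    card_le_card (inter_subset_inter inter_subset_left inter_subset_left)
  have := card_union_add_card_inter (X ∩ A) (Y ∩ A)
  rw [← union_inter_distrib_right] at this
  have := eq_of_subset_of_card_le (inter_subset_right : (X ∪ Y) ∩ A ⊆ A) (by omega)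
  rw [← this]
  exact inter_subset_left

end Finset

section
variable {V W : Type*}

structure IsLabelling (G : SimpleGraph V) (k : ℕ) (ℓ : V → Finset ℕ) : Prop where
  injective : Function.Injective ℓ
  card_eq : ∀ v, #(ℓ v) = k
  adj_iff : ∀ u v, u ≠ v → (G.Adj u v ↔ #(ℓ u ∩ ℓ v) = k - 1)

lemma labellable_iff {G : SimpleGraph V} :
    Labellable G ↔ ∃ k, 0 < k ∧ ∃ ℓ, IsLabelling G k ℓ :=
  ⟨fun ⟨k, hk, ℓ, hinj, hcard, hadj⟩ => ⟨k, hk, ℓ, hinj, hcard, hadj⟩,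
    fun ⟨k, hk, ℓ, hinj, hcard, hadj⟩ => ⟨k, hk, ℓ, hinj, hcard, hadj⟩⟩

namespace IsLabelling
variable {G : SimpleGraph V} {H : SimpleGraph W} {k : ℕ} {ℓ : V → Finset ℕ} {u v : V}

lemma card_inter_of_adj (h : IsLabelling G k ℓ) (huv : G.Adj u v) : #(ℓ u ∩ ℓ v) = k - 1 :=
  (h.adj_iff u v huv.ne).mp huv

lemma card_inter_add_two_le (h : IsLabelling G k ℓ) (hne : u ≠ v) (huv : ¬ G.Adj u v) :
    #(ℓ u ∩ ℓ v) + 2 ≤ k :=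
  Finset.card_inter_add_two_le (h.card_eq u) (h.card_eq v) (h.injective.ne hne)
    ((h.adj_iff u v hne).not.mp huv)

lemma comap (f : G ↪g H) {ℓ : W → Finset ℕ} (h : IsLabelling H k ℓ) :
    IsLabelling G k (ℓ ∘ f) where
  injective := h.injective.comp f.injective
  card_eq v := h.card_eq (f v)
  adj_iff u v huv := by
    rw [← f.map_adj_iff]
    exact h.adj_iff _ _ (f.injective.ne huv)

end IsLabelling

lemma Labellable.comap {G : SimpleGraph V} {H : SimpleGraph W} (f : G ↪g H) (h : Labellable H) :
    Labellable G := by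
  obtain ⟨k, hk, ℓ, hℓ⟩ := labellable_iff.mp h
  exact labellable_iff.mpr ⟨k, hk, _, hℓ.comap f⟩

end

instance {V W : Type*} : DecidableRel (completeBipartiteGraph V W).Adj := fun u w =>
  inferInstanceAs (Decidable (u.isLeft ∧ w.isRight ∨ u.isRight ∧ w.isLeft))

abbrev K23 := completeBipartiteGraph (Fin 2) (Fin 3)

theorem not_labellable_K23 : ¬ Labellable K23 := by
  intro h
  obtain ⟨k, -, ℓ, hℓ⟩ := labellable_iff.mp h
  set A := ℓ (.inl 0)
  set B := ℓ (.inl 1)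
  have hadj (i : Fin 2) (j : Fin 3) : #(ℓ (.inr j) ∩ ℓ (.inl i)) = k - 1 :=
    hℓ.card_inter_of_adj (by simp)
  have hfar (j j' : Fin 3) (hne : j ≠ j') : #(ℓ (.inr j) ∩ ℓ (.inr j')) + 2 ≤ k :=
    hℓ.card_inter_add_two_le (by simpa using hne) (by simp)
  have hAB : #(A ∩ B) + 2 ≤ k := hℓ.card_inter_add_two_le (by decide) (by simp)
  have hAB_sub (j : Fin 3) : A ∩ B ⊆ ℓ (.inr j) :=
    inter_subset_of_card_inter_eq (hℓ.card_eq _) (hadj 0 j) (hadj 1 j) hAB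
  have hAB_card : k ≤ #(A ∩ B) + 2 :=
    (le_card_inter_inter_add_two (hℓ.card_eq (.inr 0)) (hadj 0 0) (hadj 1 0)).trans
      (by grw [inter_subset_right])
  have hA_sub : A ⊆ ℓ (.inr 0) ∪ ℓ (.inr 1) :=
    subset_union_of_card_inter_eq (hℓ.card_eq _) (hadj 0 0) (hadj 0 1) (hfar 0 1 (by decide))
  have hinter (j : Fin 3) (hj : j ≠ 2) : ℓ (.inr 2) ∩ ℓ (.inr j) = A ∩ B :=
    (eq_of_subset_of_card_le (subset_inter (hAB_sub 2) (hAB_sub j))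
      (by have := hfar 2 j hj.symm; omega)).symm
  have hZA : ℓ (.inr 2) ∩ A ⊆ A ∩ B := calc
    ℓ (.inr 2) ∩ A ⊆ ℓ (.inr 2) ∩ (ℓ (.inr 0) ∪ ℓ (.inr 1)) := inter_subset_inter_left hA_sub
    _ = A ∩ B := by
      rw [inter_union_distrib_left, hinter 0 (by decide), hinter 1 (by decide), union_self]
  have hZA_card : #(ℓ (.inr 2) ∩ A) = k - 1 := hadj 0 2
  have := card_le_card hZA
  omega

-- Both left vertices get the same label: only one of them survives the deletion.
def starLabelling : Fin 2 ⊕ Fin 3 → Finset ℕ :=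
  Sum.elim (fun _ => {0, 1, 2}) ![{1, 2, 3}, {0, 2, 4}, {0, 1, 5}]

def cycleLabelling (j : Fin 3) : Fin 2 ⊕ Fin 3 → Finset ℕ :=
  Sum.elim ![{0, 1}, {2, 3}] fun j' => if j' = j + 1 then {1, 2} else {0, 3}

lemma isLabelling_starLabelling (i : Fin 2) :
    IsLabelling (K23.induce {.inl i}ᶜ) 3 (starLabelling ∘ (↑)) := by
  constructor <;> revert i <;> decide

lemma isLabelling_cycleLabelling (j : Fin 3) :
    IsLabelling (K23.induce {.inr j}ᶜ) 2 (cycleLabelling j ∘ (↑)) := by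
  constructor <;> revert j <;> decide

lemma labellable_K23_induce_compl_singleton (v : Fin 2 ⊕ Fin 3) :
    Labellable (K23.induce {v}ᶜ) :=
  labellable_iff.mpr <| match v with
    | .inl i => ⟨3, by norm_num, _, isLabelling_starLabelling i⟩
    | .inr j => ⟨2, by norm_num, _, isLabelling_cycleLabelling j⟩

/-- The complete bipartite graph `K_{2,3}` is minimally unlabellable: it is not
labellable, but every proper induced subgraph of it is labellable. -/
theorem K23_minimally_unlabellable :
    ¬ Labellable (completeBipartiteGraph (Fin 2) (Fin 3)) ∧
      ∀ s : Set (Fin 2 ⊕ Fin 3), s ≠ Set.univ →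
        Labellable ((completeBipartiteGraph (Fin 2) (Fin 3)).induce s) := by
  refine ⟨not_labellable_K23, fun s hs => ?_⟩
  obtain ⟨v, hv⟩ := (Set.ne_univ_iff_exists_notMem s).mp hs
  exact (labellable_K23_induce_compl_singleton v).comap
    (K23.induceHomOfLE (Set.subset_compl_singleton_iff.mpr hv))
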